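/- arXiv:2602.04860 — 2 statements merged into one kernel-verified Lean document; each statement's English description precedes it below -/
import Mathlib

section
/- For the immersion Ψ^u: M → M̃, x ↦ (e^{u(x)}, 0, x), into (M̃, g̃) with g̃ = d(rt)⊗dt + dt⊗d(rt) + t²⟨·,·⟩_r^g, the induced metric satisfies (Ψ^u)*(g̃) = e^{2u} g. -/
open scoped RealInnerProductSpace

/-- the immersion `Ψ^u : x ↦ (e^{u(x)}, 0, x)` into
`(M̃, g̃ = d(rt)⊗dt + dt⊗d(rt) + t²⟨·,·⟩_r^g)` induces the metric `e^{2u} g`.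
Pointwise model at a point `x`: the tangent space of `M` is the inner product space
`(E, ⟪·,·⟫) = (T_xM, g_x)`, `gr r = ⟨·,·⟩_r^g` with `gr 0 = g`, `u` and the
differential `du` are the values of the function and of its differential at `x`,
`g̃` at a point with coordinates `(t,r)` is
`g̃((a,b,v),(a',b',v')) = 2r·a·a' + t(b·a' + a·b') + t²⟨v,v'⟩_r`, and
`TΨ^u(V) = e^u V(u) ∂_t + V`; along `Ψ^u` one has `t = e^u`, `r = 0`. -/
theorem stmt7 {E : Type*} [NormedAddCommGroup E] [InnerProductSpace ℝ E]
    (gr : ℝ → E →ₗ[ℝ] E →ₗ[ℝ] ℝ) (hgr0 : ∀ v w : E, gr 0 v w = ⟪v, w⟫)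
    (gt : ℝ → ℝ → (ℝ × ℝ × E) → (ℝ × ℝ × E) → ℝ)
    (hgt : ∀ (t r : ℝ) (v w : ℝ × ℝ × E),
      gt t r v w = 2 * r * v.1 * w.1 + t * (v.2.1 * w.1 + v.1 * w.2.1)
        + t ^ 2 * gr r v.2.2 w.2.2)
    (u : ℝ) (du : E →ₗ[ℝ] ℝ)
    (dPsi : E → ℝ × ℝ × E) (hdPsi : ∀ v : E, dPsi v = (Real.exp u * du v, 0, v)) :
    ∀ v w : E, gt (Real.exp u) 0 (dPsi v) (dPsi w) = Real.exp (2 * u) * ⟪v, w⟫ := by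
  intro v w
  rw [hgt, hdPsi, hdPsi]
  simp [hgr0, ← Real.exp_add, two_mul, sq]
end

section
/- Along the immersion Ψ^u: x ↦ (e^{u(x)}, 0, x), the vector fields ξ^u = e^u ∂_t and ℓ^u = e^{-u}(‖∇u‖²/2) ∂_t - e^{-2u} ∂_r + e^{-2u} ∇u are both lightlike (g̃(ξ^u,ξ^u) = g̃(ℓ^u,ℓ^u) = 0), normal to the image of TΨ^u, and satisfy g̃(ξ^u, ℓ^u) = -1. -/
open scoped RealInnerProductSpace

/-- along `Ψ^u : x ↦ (e^{u(x)},0,x)`, the fields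
`ξ^u = e^u ∂_t` and `ℓ^u = e^{-u}(‖∇u‖²/2)∂_t - e^{-2u}∂_r + e^{-2u}∇u`
are lightlike, normal to the image of `TΨ^u`, and satisfy `g̃(ξ^u, ℓ^u) = -1`.
Pointwise model as in Statement 7 (tangent space `ℝ × ℝ × E` with coordinates
`(∂_t, ∂_r, lifted)`, metric `g̃` at `(t,r) = (e^u, 0)`, `gr 0 = g = ⟪·,·⟫`,
`TΨ^u(V) = e^u V(u)∂_t + V`, and `∇u` the `g`-gradient of `u`). -/
theorem stmt8 {E : Type*} [NormedAddCommGroup E] [InnerProductSpace ℝ E]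
    (gr : ℝ → E →ₗ[ℝ] E →ₗ[ℝ] ℝ) (hgr0 : ∀ v w : E, gr 0 v w = ⟪v, w⟫)
    (gt : ℝ → ℝ → (ℝ × ℝ × E) → (ℝ × ℝ × E) → ℝ)
    (hgt : ∀ (t r : ℝ) (v w : ℝ × ℝ × E),
      gt t r v w = 2 * r * v.1 * w.1 + t * (v.2.1 * w.1 + v.1 * w.2.1)
        + t ^ 2 * gr r v.2.2 w.2.2)
    (u : ℝ) (du : E →ₗ[ℝ] ℝ)
    (gradu : E) (hgrad : ∀ v : E, ⟪gradu, v⟫ = du v)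
    (dPsi : E → ℝ × ℝ × E) (hdPsi : ∀ v : E, dPsi v = (Real.exp u * du v, 0, v))
    (xi ell : ℝ × ℝ × E)
    (hxi : xi = (Real.exp u, 0, 0))
    (hell : ell = (Real.exp (-u) * ‖gradu‖ ^ 2 / 2, -Real.exp (-2 * u),
      Real.exp (-2 * u) • gradu)) :
    gt (Real.exp u) 0 xi xi = 0 ∧
    gt (Real.exp u) 0 ell ell = 0 ∧
    gt (Real.exp u) 0 xi ell = -1 ∧
    (∀ v : E, gt (Real.exp u) 0 xi (dPsi v) = 0) ∧
    (∀ v : E, gt (Real.exp u) 0 ell (dPsi v) = 0) := by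
  have ha : Real.exp u ≠ 0 := Real.exp_ne_zero u
  have h1 : Real.exp (-u) = (Real.exp u)⁻¹ := Real.exp_neg u
  have h2 : Real.exp (-2 * u) = ((Real.exp u)⁻¹) ^ 2 := by
    rw [neg_mul, Real.exp_neg, two_mul, Real.exp_add, mul_inv, sq]
  have hself : ⟪gradu, gradu⟫ = ‖gradu‖ ^ 2 := real_inner_self_eq_norm_sq gradu
  subst hxi hell
  refine ⟨?_, ?_, ?_, ?_, ?_⟩
  · simp [hgt, hgr0]
  · simp only [hgt, hgr0, map_smul, LinearMap.smul_apply, real_inner_smul_left,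
      real_inner_smul_right, hself, h1, h2, smul_eq_mul]
    field_simp
    ring
  · simp only [hgt, hgr0, map_smul, LinearMap.smul_apply, real_inner_smul_right,
      inner_zero_left, h1, h2, smul_eq_mul]
    field_simp
    ring
  · intro v
    simp [hgt, hgr0, hdPsi v]
  · intro v
    simp only [hgt, hgr0, hdPsi v, map_smul, LinearMap.smul_apply, real_inner_smul_left,
      hgrad, h1, h2, smul_eq_mul]
    field_simp
    ring
end
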